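/- Let M ≥ 1 be an integer, let k = (k_0, …, k_M) be a vector of nonnegative integers with k_0 = 0, set k̃ = (k_1, …, k_M, 0), and let m be an integer vector with 0 ≤ m ≤ min{k, k̃} entrywise. Then there exists a transmission scattering sequence p ∈ S′_M such that κ′(p) = k and β′(p) = m. -/

import Mathlib

/-- Entry `i` of an integer sequence given as a list (default `0` out of range). -/
def ent (p : List ℤ) (i : ℕ) : ℤ := p.getD i 0

/-- Excursions of `p` to depth `n`: maximal blocks `[a, c]` of consecutive
indices on which `p` is at least `n`. -/
def excSet (p : List ℤ) (n : ℤ) : Set (ℕ × ℕ) :=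
  {ac | ac.1 ≤ ac.2 ∧ ac.2 ≤ p.length - 1 ∧
    (∀ i, ac.1 ≤ i → i ≤ ac.2 → n ≤ ent p i) ∧
    (ac.1 = 0 ∨ ent p (ac.1 - 1) < n) ∧
    (ac.2 = p.length - 1 ∨ ent p (ac.2 + 1) < n)}

/-- The left shift `(k_1, ..., k_M, 0)` of a vector `(k_0, ..., k_M)`. -/
def ktilde (M : ℕ) (k : Fin (M + 1) → ℕ) : Fin (M + 1) → ℕ :=
  fun n => if h : (n : ℕ) + 1 < M + 1 then k ⟨(n : ℕ) + 1, h⟩ else 0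

/-- A transmission scattering sequence for an `M`-layer medium: a sequence
`(p_0, ..., p_L)` with `p_0 = -1`, `p_L = M + 1`, `p_i ∈ {0, ..., M}` for
`1 ≤ i ≤ L - 1`, and `|p_{i+1} - p_i| = 1` for all `0 ≤ i ≤ L - 1`. -/
def IsTransScat (M : ℕ) (p : List ℤ) : Prop :=
  ent p 0 = -1 ∧ ent p (p.length - 1) = (M : ℤ) + 1 ∧
  (∀ i, 1 ≤ i → i ≤ p.length - 2 → 0 ≤ ent p i ∧ ent p i ≤ (M : ℤ)) ∧
  (∀ i, i < p.length - 1 → |ent p (i + 1) - ent p i| = 1)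

/-- The transmission transit count vector `κ'(p)`: `k_n` is the number of
excursions of `p` to depth `n` other than the trunk block (the excursion
containing the final index `L`). -/
noncomputable def kappaT (M : ℕ) (p : List ℤ) : Fin (M + 1) → ℕ :=
  fun n => {ac ∈ excSet p ((n : ℕ) : ℤ) | ac.2 ≠ p.length - 1}.ncard

/-- The transmission branch count vector `β'(p)`: `m_n` is the number of
excursions of `p` to depth `n`, other than the trunk block, that contain some
index `i` with `p_i ≥ n + 1`. -/
noncomputable def betaT (M : ℕ) (p : List ℤ) : Fin (M + 1) → ℕ :=
  fun n => {ac ∈ excSet p ((n : ℕ) : ℤ) | ac.2 ≠ p.length - 1 ∧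
    ∃ i, ac.1 ≤ i ∧ i ≤ ac.2 ∧ ((n : ℕ) : ℤ) + 1 ≤ ent p i}.ncard

/-!
Since the path starts at `-1`, every excursion to depth `n ≥ 0` is entered by an up-step
`n - 1 → n`, and this is a bijection between excursions and such up-steps; the excursion reaches
`n + 1` exactly when the up-step is followed by `n → n + 1`. Hence `κ'_n + 1` and `β'_n + 1` are the
numbers of occurrences of `[n - 1, n]` and `[n - 1, n, n + 1]` in `p`, the `+ 1` being the trunk.

A path with prescribed counts is built from the top level down. Level `n` keeps `k_n` words, each
starting and ending at `n`: `m_n` of them are `n :: w ++ [n]` for a word `w` of level `n + 1`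
(possible since `m_n ≤ k_{n+1}`), the others are `[n]`. The `k_{n+1} - m_n` words of level `n + 1`
that were not wrapped are hung off the trunk, which at level `n` reads
`n, w_1, n, w_2, …, n, (trunk of level n + 1)`. Each word of level `n + 1` then accounts for exactly
one up-step `n → n + 1`, and one of the `[n, n + 1, n + 2]`-patterns precisely when it was itself
obtained by wrapping.
-/

namespace List

variable {α : Type*} {P l₁ l₂ : List α} {a s : α}

theorem isPrefix_append_cons_iff (hs : s ∉ P) : P <+: l₁ ++ s :: l₂ ↔ P <+: l₁ := by
  induction l₁ generalizing P with
  | nil => cases P <;> grind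
  | cons a l₁ ih => cases P <;> simp_all

theorem sum_map_eq_countP {l : List α} {f : α → ℕ} {p : α → Prop} [DecidablePred p]
    (h : ∀ a ∈ l, f a = if p a then 1 else 0) : (l.map f).sum = l.countP p := by
  induction l with
  | nil => rfl
  | cons a l ih =>
    rw [map_cons, sum_cons, countP_cons, ih fun b hb => h b (mem_cons_of_mem _ hb),
      h a mem_cons_self, add_comm]
    simp

theorem isChain_flatMap_cons_append {R : α → α → Prop} {ls : List (List α)} {t : List α}
    (hls : ∀ l ∈ ls, IsChain R l ∧ l.head? = some a ∧ l.getLast? = some a)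
    (hsa : R s a) (has : R a s) (ht : IsChain R (s :: t)) :
    IsChain R (ls.flatMap (s :: ·) ++ s :: t) := by
  induction ls with
  | nil => exact ht
  | cons l ls ih =>
    obtain ⟨hl, hhead, hlast⟩ := hls l mem_cons_self
    rw [flatMap_cons, append_assoc]
    refine (isChain_cons.2 ⟨by simpa [hhead], hl⟩).append
      (ih fun l' hl' => hls l' (mem_cons_of_mem _ hl')) ?_
    rw [getLast?_cons, hlast]
    cases ls <;> simpa

variable [DecidableEq α] {l : List α} {b : α}

def countInfix (P l : List α) : ℕ := l.tails.countP (P <+: ·)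

theorem countInfix_cons :
    countInfix P (a :: l) = (if P <+: a :: l then 1 else 0) + countInfix P l := by
  simp [countInfix, countP_cons, add_comm]

@[simp] theorem countInfix_nil_right : countInfix (b :: P) [] = 0 := by
  simp [countInfix]

theorem countInfix_cons_of_ne (h : b ≠ a) :
    countInfix (b :: P) (a :: l) = countInfix (b :: P) l := by
  simp [countInfix_cons, h]

theorem countInfix_append_of_not_mem (h : b ∉ l₁) :
    countInfix (b :: P) (l₁ ++ l₂) = countInfix (b :: P) l₂ := by
  induction l₁ with
  | nil => rfl
  | cons a l₁ ih =>
    simp only [mem_cons, not_or] at h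
    rw [cons_append, countInfix_cons_of_ne h.1, ih h.2]

theorem countInfix_append_cons (hs : s ∉ b :: P) :
    countInfix (b :: P) (l₁ ++ s :: l₂) =
      countInfix (b :: P) l₁ + countInfix (b :: P) (s :: l₂) := by
  induction l₁ with
  | nil => simp
  | cons a l₁ ih =>
    have hpre := isPrefix_append_cons_iff (l₁ := a :: l₁) (l₂ := l₂) hs
    rw [cons_append] at hpre ⊢
    simp only [countInfix_cons, ih, hpre, add_assoc]

theorem countInfix_flatMap_cons (hs : s ∉ b :: P) (ls : List (List α)) :
    countInfix (b :: P) (ls.flatMap (s :: ·)) = (ls.map (countInfix (b :: P))).sum := by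
  have hbs : b ≠ s := fun h => hs (h ▸ mem_cons_self)
  induction ls with
  | nil => exact countInfix_nil_right
  | cons l ls ih =>
    cases ls with
    | nil => simp [countInfix_cons_of_ne hbs]
    | cons l' ls =>
      simp only [flatMap_cons, cons_append, map_cons, sum_cons] at ih ⊢
      rw [countInfix_cons_of_ne hbs, countInfix_append_cons hs, ih]

theorem countInfix_cons_flatMap_cons (hP : s ∉ P) {ls : List (List α)}
    (hl : ∀ l ∈ ls, s ∉ l) :
    countInfix (s :: P) (ls.flatMap (s :: ·)) = ls.countP (P <+: ·) := by
  induction ls with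
  | nil => exact countInfix_nil_right
  | cons l ls ih =>
    rw [flatMap_cons, cons_append, countInfix_cons,
      countInfix_append_of_not_mem (hl l mem_cons_self),
      ih fun l' hl' => hl l' (mem_cons_of_mem _ hl'), countP_cons, add_comm]
    cases ls with
    | nil => simp
    | cons l' ls => simp [isPrefix_append_cons_iff hP]

theorem countInfix_eq_card_filter :
    countInfix P l = ((Finset.range (l.length + 1)).filter fun i => P <+: l.drop i).card := by
  induction l with
  | nil => by_cases hP : P = [] <;> simp [countInfix, hP]
  | cons a l ih =>
    rw [countInfix_cons, ih, Finset.card_filter, Finset.card_filter, length_cons,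
      Finset.sum_range_succ' _ (l.length + 1)]
    simp [add_comm]

theorem countInfix_eq_ncard : countInfix (b :: P) l = {i | b :: P <+: l.drop i}.ncard := by
  rw [countInfix_eq_card_filter, ← Set.ncard_coe_finset]
  congr 1
  ext i
  simp only [Finset.coe_filter, Finset.mem_range, Set.mem_ofPred_eq, and_iff_right_iff_imp]
  intro h
  by_contra hi
  rw [drop_eq_nil_of_le (by omega)] at h
  simp at h

end List

open List

section Excursions

variable {M : ℕ} {p : List ℤ} {n : ℤ}

theorem cons_isPrefix_drop_iff {a : ℤ} {P : List ℤ} {i : ℕ} :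
    a :: P <+: p.drop i ↔ i < p.length ∧ ent p i = a ∧ P <+: p.drop (i + 1) := by
  by_cases hi : i < p.length
  · rw [drop_eq_getElem_cons hi, cons_prefix_cons, ent, getD_eq_getElem _ _ hi]
    simp [hi, eq_comm]
  · rw [drop_eq_nil_of_le (not_lt.1 hi)]
    simp [hi]

theorem eq_of_mem_excSet {ac bd : ℕ × ℕ} (hac : ac ∈ excSet p n) (hbd : bd ∈ excSet p n)
    {i : ℕ} (hi : ac.1 ≤ i ∧ i ≤ ac.2) (hi' : bd.1 ≤ i ∧ i ≤ bd.2) : ac = bd := by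
  obtain ⟨a, c⟩ := ac
  obtain ⟨b, e⟩ := bd
  obtain ⟨-, hc, hac, hleft, hright⟩ := hac
  obtain ⟨-, he, hbd, hleft', hright'⟩ := hbd
  simp only at hi hi' hc he hac hleft hright hbd hleft' hright'
  have hab : a = b := by
    rcases lt_trichotomy a b with h | h | h
    · have := hac (b - 1) (by omega) (by omega)
      omega
    · exact h
    · have := hbd (a - 1) (by omega) (by omega)
      omega
  have hce : c = e := by
    rcases lt_trichotomy c e with h | h | h
    · have := hbd (c + 1) (by omega) (by omega)
      omega
    · exact h
    · have := hac (e + 1) (by omega) (by omega)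
      omega
  rw [hab, hce]

theorem exists_mem_excSet {i : ℕ} (hi : i ≤ p.length - 1) (hn : n ≤ ent p i) :
    ∃ ac ∈ excSet p n, ac.1 ≤ i ∧ i ≤ ac.2 := by
  classical
  let Left a := a ≤ i ∧ ∀ j, a ≤ j → j ≤ i → n ≤ ent p j
  let Right c := ∀ j, i ≤ j → j ≤ c → n ≤ ent p j
  have hex : ∃ a, Left a := ⟨i, le_rfl, fun j h1 h2 => by rwa [le_antisymm h2 h1]⟩
  have hR : Right i := fun j h1 h2 => by rwa [le_antisymm h2 h1]
  set a := Nat.find hex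
  set c := Nat.findGreatest Right (p.length - 1)
  obtain ⟨hai, ha⟩ : Left a := Nat.find_spec hex
  have hc : Right c := Nat.findGreatest_spec hi hR
  have hic : i ≤ c := Nat.le_findGreatest hi hR
  have hcL : c ≤ p.length - 1 := Nat.findGreatest_le _
  refine ⟨(a, c), ⟨by omega, hcL, fun j h1 h2 => ?_, ?_, ?_⟩, hai, hic⟩
  · rcases le_total j i with h | h
    · exact ha j h1 h
    · exact hc j h h2
  · by_contra! h
    refine Nat.find_min hex (m := a - 1) (by omega) ⟨by omega, fun j h1 h2 => ?_⟩
    rcases eq_or_lt_of_le h1 with rfl | h1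
    · exact h.2
    · exact ha j (by omega) h2
  · dsimp only
    by_contra! h
    refine Nat.findGreatest_is_greatest (P := Right) (n := p.length - 1) (k := c + 1)
      (Nat.lt_succ_self c) (by omega) fun j h1 h2 => ?_
    rcases eq_or_lt_of_le h2 with rfl | h2
    · exact h.2
    · exact hc j h1 (by omega)

theorem excSet_finite : (excSet p n).Finite :=
  ((Set.finite_Iic (p.length - 1)).prod (Set.finite_Iic (p.length - 1))).subset
    fun _ hac => ⟨hac.1.trans hac.2.1, hac.2.1⟩

theorem IsTransScat.step (hp : IsTransScat M p) {i : ℕ} (hi : i < p.length - 1) :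
    ent p (i + 1) = ent p i + 1 ∨ ent p (i + 1) = ent p i - 1 := by
  have := (abs_eq zero_le_one).1 (hp.2.2.2 i hi)
  omega

theorem IsTransScat.start_of_mem_excSet (hp : IsTransScat M p) (hn : 0 ≤ n) {ac : ℕ × ℕ}
    (hac : ac ∈ excSet p n) : 1 ≤ ac.1 ∧ ent p (ac.1 - 1) = n - 1 ∧ ent p ac.1 = n := by
  obtain ⟨hac1, hac2, hall, hleft, -⟩ := hac
  have ha : ac.1 ≠ 0 := fun h => by
    have := hall 0 (by omega) (by omega)
    rw [hp.1] at this
    omega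
  have hlt := hleft.resolve_left ha
  have hge := hall ac.1 le_rfl hac1
  have := hp.step (i := ac.1 - 1) (by omega)
  rw [Nat.sub_add_cancel (by omega)] at this
  omega

theorem IsTransScat.injOn_excSet (hp : IsTransScat M p) (hn : 0 ≤ n) :
    Set.InjOn (fun ac : ℕ × ℕ => ac.1 - 1) (excSet p n) := by
  intro ac hac bd hbd h
  simp only at h
  have := (hp.start_of_mem_excSet hn hac).1
  have := (hp.start_of_mem_excSet hn hbd).1
  have := hbd.1
  exact eq_of_mem_excSet hac hbd ⟨le_rfl, hac.1⟩ ⟨by omega, by omega⟩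

theorem IsTransScat.image_excSet (hp : IsTransScat M p) (hn : 0 ≤ n) :
    (fun ac : ℕ × ℕ => ac.1 - 1) '' excSet p n = {i | [n - 1, n] <+: p.drop i} := by
  ext i
  simp only [Set.mem_image, Set.mem_ofPred_eq, cons_isPrefix_drop_iff, nil_prefix, and_true]
  constructor
  · rintro ⟨ac, hac, rfl⟩
    obtain ⟨h1, h2, h3⟩ := hp.start_of_mem_excSet hn hac
    have := hac.1
    have := hac.2.1
    exact ⟨by omega, h2, by omega, by rwa [Nat.sub_add_cancel h1]⟩
  · rintro ⟨-, hi1, hi2, hi3⟩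
    obtain ⟨ac, hac, ha, hc⟩ := exists_mem_excSet (i := i + 1) (by omega) hi3.ge
    have : ac.1 = i + 1 := by
      by_contra
      have := hac.2.2.1 i (by omega) (by omega)
      omega
    exact ⟨ac, hac, by omega⟩

theorem IsTransScat.image_excSet_branch (hp : IsTransScat M p) (hn : 0 ≤ n) :
    (fun ac : ℕ × ℕ => ac.1 - 1) ''
        {ac ∈ excSet p n | ∃ i, ac.1 ≤ i ∧ i ≤ ac.2 ∧ n + 1 ≤ ent p i} =
      {i | [n - 1, n, n + 1] <+: p.drop i} := by
  ext i
  constructor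
  · rintro ⟨ac, ⟨hac, j, hj1, hj2, hj3⟩, rfl⟩
    obtain ⟨h1, -, h3⟩ := hp.start_of_mem_excSet hn hac
    have hlt : ac.1 < ac.2 := by
      by_contra
      rw [show j = ac.1 by omega] at hj3
      omega
    have hge := hac.2.2.1 (ac.1 + 1) (by omega) (by omega)
    have := hac.2.1
    have := hp.step (i := ac.1) (by omega)
    have hpair : ac.1 - 1 ∈ {i | [n - 1, n] <+: p.drop i} := by
      rw [← hp.image_excSet hn]
      exact ⟨ac, hac, rfl⟩
    simp only [Set.mem_ofPred_eq, cons_isPrefix_drop_iff, nil_prefix, and_true] at hpair ⊢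
    rw [Nat.sub_add_cancel h1] at hpair ⊢
    exact ⟨hpair.1, hpair.2.1, hpair.2.2.1, hpair.2.2.2, by omega, by omega⟩
  · intro hi
    have hi' := hi
    simp only [Set.mem_ofPred_eq, cons_isPrefix_drop_iff, nil_prefix, and_true] at hi'
    obtain ⟨ac, hac, hai⟩ : i ∈ (fun ac : ℕ × ℕ => ac.1 - 1) '' excSet p n := by
      rw [hp.image_excSet hn]
      simpa only [Set.mem_ofPred_eq, cons_isPrefix_drop_iff, nil_prefix, and_true] using
        ⟨hi'.1, hi'.2.1, hi'.2.2.1, hi'.2.2.2.1⟩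
    have h1 := (hp.start_of_mem_excSet hn hac).1
    simp only at hai
    have hc : i + 1 + 1 ≤ ac.2 := by
      by_contra
      have h2 : ac.2 = i + 1 := by have := hac.1; omega
      rcases hac.2.2.2.2 with h | h <;> rw [h2] at h <;> omega
    exact ⟨ac, ⟨hac, i + 1 + 1, by omega, hc, hi'.2.2.2.2.2.ge⟩, hai⟩

theorem IsTransScat.ncard_sep_ne_last_add_one (hp : IsTransScat M p) (hnM : n ≤ M)
    (Q : ℕ × ℕ → Prop) (hQ : ∀ ac ∈ excSet p n, ac.2 = p.length - 1 → Q ac) :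
    {ac ∈ excSet p n | ac.2 ≠ p.length - 1 ∧ Q ac}.ncard + 1 =
      {ac ∈ excSet p n | Q ac}.ncard := by
  obtain ⟨τ, hτ, hτ1, hτ2⟩ := exists_mem_excSet (n := n) (i := p.length - 1) le_rfl
    (by rw [hp.2.1]; omega)
  have hτL : τ.2 = p.length - 1 := le_antisymm hτ.2.1 hτ2
  have hdiff : {ac ∈ excSet p n | ac.2 ≠ p.length - 1 ∧ Q ac} =
      {ac ∈ excSet p n | Q ac} \ {τ} := by
    ext ac
    simp only [Set.mem_sdiff, Set.mem_singleton_iff, Set.mem_ofPred_eq]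
    constructor
    · rintro ⟨hac, hne, hQac⟩
      exact ⟨⟨hac, hQac⟩, fun h => hne (h ▸ hτL)⟩
    · rintro ⟨⟨hac, hQac⟩, hne⟩
      refine ⟨hac, fun hL => hne (eq_of_mem_excSet hac hτ (i := p.length - 1) ?_ ⟨hτ1, hτ2⟩),
        hQac⟩
      exact ⟨hL ▸ hac.1, hL.ge⟩
  rw [hdiff]
  exact Set.ncard_sdiff_singleton_add_one ⟨hτ, hQ τ hτ hτL⟩ (excSet_finite.subset fun _ h => h.1)

theorem IsTransScat.kappaT_add_one (hp : IsTransScat M p) (v : Fin (M + 1)) :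
    kappaT M p v + 1 = countInfix [(v : ℤ) - 1, v] p := by
  have hv : (0 : ℤ) ≤ (v : ℕ) := by positivity
  have := hp.ncard_sep_ne_last_add_one (n := (v : ℕ)) (by have := v.isLt; omega)
    (fun _ => True) (fun _ _ _ => trivial)
  simp only [and_true, Set.ofPred_mem_eq] at this
  rw [kappaT, this, countInfix_eq_ncard, ← hp.image_excSet hv, (hp.injOn_excSet hv).ncard_image]

theorem IsTransScat.betaT_add_one (hp : IsTransScat M p) (v : Fin (M + 1)) :
    betaT M p v + 1 = countInfix [(v : ℤ) - 1, v, v + 1] p := by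
  have hv : (0 : ℤ) ≤ (v : ℕ) := by positivity
  rw [betaT, hp.ncard_sep_ne_last_add_one (by have := v.isLt; omega), countInfix_eq_ncard,
    ← hp.image_excSet_branch hv, ((hp.injOn_excSet hv).mono fun _ h => h.1).ncard_image]
  intro ac hac hL
  refine ⟨p.length - 1, hL ▸ hac.1, hL.ge, ?_⟩
  rw [hp.2.1]
  have := v.isLt
  omega

end Excursions

abbrev IsSimpleWalk (l : List ℤ) : Prop := l.IsChain fun x y => |y - x| = 1

theorem isTransScat_of_isSimpleWalk {M : ℕ} {T : List ℤ} (hT : ∀ x ∈ T, 0 ≤ x ∧ x ≤ M)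
    (hw : IsSimpleWalk (-1 :: T ++ [(M : ℤ) + 1])) :
    IsTransScat M (-1 :: T ++ [(M : ℤ) + 1]) := by
  refine ⟨rfl, by simp [ent], fun i h1 h2 => ?_, fun i hi => ?_⟩
  · obtain ⟨j, rfl⟩ : ∃ j, i = j + 1 := ⟨i - 1, by omega⟩
    have hj : j < T.length := by
      simp only [cons_append, length_cons, length_append, length_nil] at h2
      omega
    rw [ent, cons_append, getD_cons_succ, getD_append _ _ _ _ hj, getD_eq_getElem _ _ hj]
    exact hT _ (getElem_mem hj)
  · rw [ent, ent, getD_eq_getElem _ _ (by omega), getD_eq_getElem _ _ (by omega)]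
    exact isChain_iff_getElem.1 hw i (by omega)

namespace Realization

variable (k m : ℤ → ℕ)

/-- The excursion words of level `n` when the top level is `n + d`. -/
def words : ℤ → ℕ → List (List ℤ)
  | _, 0 => []
  | n, d + 1 => ((words (n + 1) d).take (m n)).map (fun w => n :: w ++ [n]) ++
      replicate (k n - m n) [n]

/-- The path from level `n` up to the top level `n + d`. -/
def trunk : ℤ → ℕ → List ℤ
  | n, 0 => [n]
  | n, d + 1 => ((words k m (n + 1) d).drop (m n) ++ [trunk (n + 1) d]).flatMap (n :: ·)

def stageCount (P : List ℤ) (n : ℤ) (d : ℕ) : ℕ :=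
  countInfix P (trunk k m n d) + ((words k m n d).map (countInfix P)).sum

variable {k m} {n : ℤ} {d : ℕ} {w : List ℤ}

theorem bounds_of_mem_words (hw : w ∈ words k m n d) {x : ℤ} (hx : x ∈ w) :
    n ≤ x ∧ x < n + d := by
  induction d generalizing n w with
  | zero => simp [words] at hw
  | succ d ih =>
    simp only [words, mem_append, mem_map, mem_replicate] at hw
    rcases hw with ⟨w', hw', rfl⟩ | ⟨-, rfl⟩
    · rw [mem_append, mem_cons, mem_singleton] at hx
      rcases hx with (rfl | hx) | rfl
      · omega
      · have := ih (mem_of_mem_take hw') hx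
        push_cast
        omega
      · omega
    · rw [mem_singleton] at hx
      omega

theorem head?_getLast?_of_mem_words (hw : w ∈ words k m n d) :
    w.head? = some n ∧ w.getLast? = some n := by
  cases d with
  | zero => simp [words] at hw
  | succ d =>
    simp only [words, mem_append, mem_map, mem_replicate] at hw
    rcases hw with ⟨w', -, rfl⟩ | ⟨-, rfl⟩
    · exact ⟨rfl, getLast?_concat⟩
    · exact ⟨rfl, rfl⟩

theorem isSimpleWalk_of_mem_words (hw : w ∈ words k m n d) : IsSimpleWalk w := by
  induction d generalizing n w with
  | zero => simp [words] at hw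
  | succ d ih =>
    simp only [words, mem_append, mem_map, mem_replicate] at hw
    rcases hw with ⟨w', hw', rfl⟩ | ⟨-, rfl⟩
    · have hw' := mem_of_mem_take hw'
      have := isChain_flatMap_cons_append (R := fun x y : ℤ => |y - x| = 1) (s := n)
        (ls := [w']) (t := []) (a := n + 1)
        (by simpa using ⟨ih hw', head?_getLast?_of_mem_words hw'⟩) (by simp) (by simp) (by simp)
      simpa using this
    · simp

theorem length_words (hm : ∀ z, m z ≤ min (k z) (k (z + 1))) (htop : k (n + d) = 0) :
    (words k m n d).length = k n := by
  induction d generalizing n with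
  | zero => simpa [words] using htop.symm
  | succ d ih =>
    have hlen := ih (n := n + 1) (by rw [← htop]; push_cast; ring_nf)
    have := hm n
    simp only [words, length_append, length_map, length_take, length_replicate, hlen]
    omega

theorem countP_words (hm : ∀ z, m z ≤ min (k z) (k (z + 1))) (htop : k (n + d) = 0) :
    (words k m n d).countP ([n, n + 1] <+: ·) = m n := by
  have := hm n
  cases d with
  | zero =>
    simp only [Nat.cast_zero, add_zero] at htop
    simp only [words, countP_nil]
    omega
  | succ d =>
    have hlen := length_words hm (n := n + 1) (d := d) (by rw [← htop]; push_cast; ring_nf)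
    have hwrap : ∀ w ∈ (words k m (n + 1) d).take (m n), [n, n + 1] <+: n :: w ++ [n] := by
      intro w hw
      obtain ⟨w', rfl⟩ :=
        head?_eq_some_iff.1 (head?_getLast?_of_mem_words (mem_of_mem_take hw)).1
      simp
    rw [words, countP_append, countP_map, countP_replicate, if_neg (by simp),
      countP_eq_length.2 (by simpa using hwrap), length_take, hlen]
    omega

theorem head?_trunk : (trunk k m n d).head? = some n := by
  cases d with
  | zero => rfl
  | succ d => rw [trunk]; cases (words k m (n + 1) d).drop (m n) <;> rfl

theorem trunk_eq_append :
    ∃ T, trunk k m n d = T ++ [n + d] ∧ ∀ x ∈ T, n ≤ x ∧ x < n + d := by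
  induction d generalizing n with
  | zero => exact ⟨[], by simp [trunk], by simp⟩
  | succ d ih =>
    obtain ⟨T, hT, hTb⟩ := ih (n := n + 1)
    refine ⟨((words k m (n + 1) d).drop (m n)).flatMap (n :: ·) ++ n :: T, ?_, ?_⟩
    · rw [trunk, flatMap_append, flatMap_singleton, hT]
      simp [add_assoc, add_comm (1 : ℤ)]
    · intro x hx
      simp only [mem_append, mem_flatMap, mem_cons] at hx
      rcases hx with ⟨w, hw, rfl | hx⟩ | rfl | hx
      · omega
      · have := bounds_of_mem_words (mem_of_mem_drop hw) hx
        push_cast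
        omega
      · omega
      · have := hTb x hx
        push_cast
        omega

theorem bounds_of_mem_trunk {x : ℤ} (hx : x ∈ trunk k m n d) : n ≤ x ∧ x ≤ n + d := by
  obtain ⟨T, hT, hTb⟩ := trunk_eq_append (k := k) (m := m) (n := n) (d := d)
  rw [hT, mem_append, mem_singleton] at hx
  rcases hx with hx | rfl
  · have := hTb x hx
    omega
  · omega

theorem isPrefix_trunk : [n, n + 1] <+: trunk k m n (d + 1) := by
  have hhead : ∀ l ∈ (words k m (n + 1) d).drop (m n) ++ [trunk k m (n + 1) d],
      l.head? = some (n + 1) := by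
    intro l hl
    rw [mem_append, mem_singleton] at hl
    rcases hl with hl | rfl
    · exact (head?_getLast?_of_mem_words (mem_of_mem_drop hl)).1
    · exact head?_trunk
  obtain ⟨l, ls, hls⟩ := exists_cons_of_ne_nil
    (by simp : (words k m (n + 1) d).drop (m n) ++ [trunk k m (n + 1) d] ≠ [])
  obtain ⟨l', rfl⟩ := head?_eq_some_iff.1 (hhead l (hls ▸ mem_cons_self))
  rw [trunk, hls]
  simp

theorem isSimpleWalk_trunk : IsSimpleWalk (trunk k m n d) := by
  induction d generalizing n with
  | zero => simp [trunk]
  | succ d ih =>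
    rw [trunk, flatMap_append, flatMap_singleton]
    refine isChain_flatMap_cons_append (a := n + 1) ?_ (by simp) (by simp)
      (isChain_cons.2 ⟨by simp [head?_trunk], ih⟩)
    intro w hw
    have hw := mem_of_mem_drop hw
    exact ⟨isSimpleWalk_of_mem_words hw, head?_getLast?_of_mem_words hw⟩

theorem stageCount_succ_of_not_mem {b : ℤ} {P : List ℤ} (hn : n ∉ b :: P) :
    stageCount k m (b :: P) n (d + 1) = stageCount k m (b :: P) (n + 1) d := by
  have hwrap (w : List ℤ) : countInfix (b :: P) (n :: (w ++ [n])) = countInfix (b :: P) w := by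
    simpa using countInfix_flatMap_cons hn [w, []]
  have hleaf : countInfix (b :: P) [n] = 0 := by simpa using countInfix_flatMap_cons hn [[]]
  have hwords : ((words k m n (d + 1)).map (countInfix (b :: P))).sum =
      (((words k m (n + 1) d).take (m n)).map (countInfix (b :: P))).sum := by
    simp [words, Function.comp_def, hwrap, hleaf]
  rw [stageCount, stageCount, hwords, trunk, countInfix_flatMap_cons hn, map_append, sum_append,
    map_singleton, sum_singleton,
    ← sum_take_add_sum_drop ((words k m (n + 1) d).map (countInfix (b :: P))) (m n),
    ← map_take, ← map_drop]
  omega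

theorem stageCount_succ_cons {P : List ℤ} (hn : n ∉ P) (hP : P ≠ []) :
    stageCount k m (n :: P) n (d + 1) =
      (words k m (n + 1) d).countP (P <+: ·) + if P <+: trunk k m (n + 1) d then 1 else 0 := by
  have hnW : ∀ w ∈ words k m (n + 1) d, n ∉ w := fun w hw hnw =>
    absurd (bounds_of_mem_words hw hnw).1 (by omega)
  have hnT : n ∉ trunk k m (n + 1) d := fun h => absurd (bounds_of_mem_trunk h).1 (by omega)
  have hwrap : ∀ w ∈ (words k m (n + 1) d).take (m n),
      countInfix (n :: P) (n :: w ++ [n]) = if P <+: w then 1 else 0 := by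
    intro w hw
    have := countInfix_cons_flatMap_cons hn (ls := [w, []])
      (by simpa using hnW w (mem_of_mem_take hw))
    simp_all [countP_cons]
  have hleaf : countInfix (n :: P) [n] = 0 := by
    simpa [hP] using countInfix_cons_flatMap_cons hn (ls := [[]]) (by simp)
  have hwords : ((words k m n (d + 1)).map (countInfix (n :: P))).sum =
      ((words k m (n + 1) d).take (m n)).countP (P <+: ·) := by
    rw [words, map_append, sum_append, map_replicate, hleaf, sum_replicate, smul_zero, add_zero,
      map_map]
    exact sum_map_eq_countP hwrap
  have hsep : ∀ l ∈ (words k m (n + 1) d).drop (m n) ++ [trunk k m (n + 1) d], n ∉ l := by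
    intro l hl
    rw [mem_append, mem_singleton] at hl
    rcases hl with hl | rfl
    · exact hnW l (mem_of_mem_drop hl)
    · exact hnT
  have hsplit := countP_append (p := (P <+: ·)) (l₁ := (words k m (n + 1) d).take (m n))
    (l₂ := (words k m (n + 1) d).drop (m n))
  rw [take_append_drop] at hsplit
  rw [stageCount, hwords, trunk, countInfix_cons_flatMap_cons hn hsep, countP_append,
    countP_singleton, hsplit]
  simp only [decide_eq_true_eq]
  omega

theorem stageCount_pair (hm : ∀ z, m z ≤ min (k z) (k (z + 1))) {u : ℤ}
    (htop : k (n + d) = 0) (hnu : n ≤ u) (hud : u < n + d) :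
    stageCount k m [u, u + 1] n d = k (u + 1) + 1 := by
  induction d generalizing n with
  | zero => omega
  | succ d ih =>
    have htop' : k (n + 1 + d) = 0 := by rw [← htop]; push_cast; ring_nf
    rcases hnu.eq_or_lt with rfl | hlt
    · rw [stageCount_succ_cons (by simp) (by simp), countP_eq_length.2, length_words hm htop',
        if_pos (singleton_prefix_iff_head?_eq_some.2 head?_trunk)]
      exact fun w hw => by
        simpa using singleton_prefix_iff_head?_eq_some.2 (head?_getLast?_of_mem_words hw).1
    · rw [stageCount_succ_of_not_mem (by simp only [mem_cons, not_mem_nil, or_false]; omega)]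
      exact ih htop' (by omega) (by push_cast at hud ⊢; omega)

theorem stageCount_triple (hm : ∀ z, m z ≤ min (k z) (k (z + 1))) {u : ℤ}
    (htop : k (n + d) = 0) (hnu : n ≤ u) (hud : u + 1 < n + d) :
    stageCount k m [u, u + 1, u + 2] n d = m (u + 1) + 1 := by
  induction d generalizing n with
  | zero => omega
  | succ d ih =>
    have htop' : k (n + 1 + d) = 0 := by rw [← htop]; push_cast; ring_nf
    rcases hnu.eq_or_lt with rfl | hlt
    · obtain ⟨d, rfl⟩ : ∃ d', d = d' + 1 := ⟨d - 1, by push_cast at hud; omega⟩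
      rw [stageCount_succ_cons (by simp) (by simp), show n + 2 = n + 1 + 1 by ring,
        countP_words hm htop', if_pos isPrefix_trunk]
    · rw [stageCount_succ_of_not_mem (by simp only [mem_cons, not_mem_nil, or_false]; omega)]
      exact ih htop' (by omega) (by push_cast at hud ⊢; omega)

theorem exists_isTransScat {M : ℕ} (hm : ∀ z, m z ≤ min (k z) (k (z + 1)))
    (hk : ∀ z : ℤ, z ≤ 0 ∨ M < z → k z = 0) :
    ∃ p, IsTransScat M p ∧ ∀ v : ℤ, 0 ≤ v → v ≤ M →
      countInfix [v - 1, v] p = k v + 1 ∧ countInfix [v - 1, v, v + 1] p = m v + 1 := by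
  have htop : k (-1 + (M + 2 : ℕ)) = 0 := hk (-1 + (M + 2 : ℕ)) (by push_cast; omega)
  have hwords : words k m (-1) (M + 2) = [] :=
    length_eq_zero_iff.1 ((length_words hm htop).trans (hk (-1) (by omega)))
  have hwords0 : words k m 0 (M + 1) = [] :=
    length_eq_zero_iff.1 ((length_words hm (hk (0 + (M + 1 : ℕ)) (by push_cast; omega))).trans
      (hk 0 (by omega)))
  obtain ⟨T, hT, hTb⟩ := trunk_eq_append (k := k) (m := m) (n := 0) (d := M + 1)
  have hp : trunk k m (-1) (M + 2) = -1 :: T ++ [(M : ℤ) + 1] := by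
    rw [trunk]
    norm_num [hwords0, hT]
  have hcount (P : List ℤ) :
      countInfix P (trunk k m (-1) (M + 2)) = stageCount k m P (-1) (M + 2) := by
    simp [stageCount, hwords]
  refine ⟨trunk k m (-1) (M + 2), ?_, fun v hv0 hvM => ⟨?_, ?_⟩⟩
  · rw [hp]
    refine isTransScat_of_isSimpleWalk (fun x hx => ?_) (hp ▸ isSimpleWalk_trunk)
    have := hTb x hx
    push_cast at this
    omega
  · have h := stageCount_pair hm (u := v - 1) htop (by omega) (by push_cast; omega)
    rwa [sub_add_cancel, ← hcount] at h
  · have h := stageCount_triple hm (u := v - 1) htop (by omega) (by push_cast; omega)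
    rwa [sub_add_cancel, show v - 1 + 2 = v + 1 by ring, ← hcount] at h

end Realization

theorem extend_fin_natCast {N : ℕ} (k : Fin N → ℕ) (i : Fin N) :
    Function.extend (fun i : Fin N => ((i : ℕ) : ℤ)) k 0 (i : ℕ) = k i :=
  (Nat.cast_injective.comp Fin.val_injective).extend_apply k 0 i

theorem extend_fin_of_not_mem {N : ℕ} (k : Fin N → ℕ) {z : ℤ} (hz : z < 0 ∨ N ≤ z) :
    Function.extend (fun i : Fin N => ((i : ℕ) : ℤ)) k 0 z = 0 :=
  Function.extend_apply' _ _ _ fun ⟨i, hi⟩ => by have := i.isLt; omega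

theorem ktilde_eq_extend {M : ℕ} (k : Fin (M + 1) → ℕ) (i : Fin (M + 1)) :
    ktilde M k i = Function.extend (fun i : Fin (M + 1) => ((i : ℕ) : ℤ)) k 0 ((i : ℕ) + 1) := by
  rw [ktilde]
  split_ifs with h
  · exact (extend_fin_natCast k ⟨(i : ℕ) + 1, h⟩).symm
  · exact (extend_fin_of_not_mem k (by omega)).symm

theorem trans_realization_general (M : ℕ)
    (k : Fin (M + 1) → ℕ) (hk0 : k 0 = 0)
    (m : Fin (M + 1) → ℕ) (hm : ∀ n, m n ≤ min (k n) (ktilde M k n)) :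
    ∃ p : List ℤ, IsTransScat M p ∧ kappaT M p = k ∧ betaT M p = m := by
  set k' := Function.extend (fun i : Fin (M + 1) => ((i : ℕ) : ℤ)) k 0
  set m' := Function.extend (fun i : Fin (M + 1) => ((i : ℕ) : ℤ)) m 0
  have hm' : ∀ z, m' z ≤ min (k' z) (k' (z + 1)) := by
    intro z
    by_cases hz : 0 ≤ z ∧ z < M + 1
    · obtain ⟨i, rfl⟩ : ∃ i : Fin (M + 1), z = (i : ℕ) :=
        ⟨⟨z.toNat, by omega⟩, (Int.toNat_of_nonneg hz.1).symm⟩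
      simpa [k', m', extend_fin_natCast, ← ktilde_eq_extend] using hm i
    · rw [show m' z = 0 from extend_fin_of_not_mem m (by omega)]
      exact Nat.zero_le _
  have hk' : ∀ z : ℤ, z ≤ 0 ∨ M < z → k' z = 0 := by
    intro z hz
    rcases eq_or_ne z 0 with rfl | hz0
    · simpa using (extend_fin_natCast k 0).trans hk0
    · exact extend_fin_of_not_mem k (by omega)
  obtain ⟨p, hp, hcount⟩ := Realization.exists_isTransScat hm' hk'
  refine ⟨p, hp, funext fun v => ?_, funext fun v => ?_⟩
  · have := hp.kappaT_add_one v
    have := (hcount v (by positivity) (by omega)).1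
    rw [show k' v = k v from extend_fin_natCast k v] at this
    omega
  · have := hp.betaT_add_one v
    have := (hcount v (by positivity) (by omega)).2
    rw [show m' v = m v from extend_fin_natCast m v] at this
    omega

/-- Proposition 2 of the paper: given `k` with `k_0 = 0` and
`0 ≤ m ≤ min{k, k̃}`, there is a transmission scattering sequence `p` with
`κ'(p) = k` and `β'(p) = m`. -/
theorem trans_realization (M : ℕ) (hM : 1 ≤ M)
    (k : Fin (M + 1) → ℕ) (hk0 : k 0 = 0)
    (m : Fin (M + 1) → ℕ) (hm : ∀ n, m n ≤ min (k n) (ktilde M k n)) :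
    ∃ p : List ℤ, IsTransScat M p ∧ kappaT M p = k ∧ betaT M p = m :=
  trans_realization_general M k hk0 m hm
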